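/- The set f of almost convergent real sequences is a closed linear subspace of the Banach space ℓ∞ of bounded sequences with the supremum norm. -/

import Mathlib

open Filter

/-- The Cesàro-type mean `t_{mn}(x) = (1/(m+1)) ∑_{i=0}^m x_{n+i}`. -/
noncomputable def tmn (x : ℕ → ℝ) (m n : ℕ) : ℝ :=
  (1 / (m + 1 : ℝ)) * ∑ i ∈ Finset.range (m + 1), x (n + i)

/-- `x` is almost convergent to `L`: `t_{mn}(x) → L` as `m → ∞`, uniformly in `n`. -/
def AlmostConvergentTo (x : ℕ → ℝ) (L : ℝ) : Prop :=
  TendstoUniformly (fun m n => tmn x m n) (fun _ => L) atTop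

/-- The set of almost convergent sequences inside `ℓ∞`. -/
def almostConvSet : Set (lp (fun _ : ℕ => ℝ) ⊤) :=
  {x | ∃ L, AlmostConvergentTo (fun n => x n) L}

/-!
The means `x ↦ (n ↦ tmn x m n)` are linear and `1`-Lipschitz from `ℓ∞` to `ℕ →ᵤ ℝ` (functions
with the uniformity of uniform convergence), so they form a uniformly equicontinuous family, and
almost convergence says that they converge, in the complete space `ℕ →ᵤ ℝ`, to a constant function.
For a uniformly equicontinuous family with complete target, the points at which it converges into a
closed set form a closed set: on that set the limit is uniformly continuous, so it extends to the
closure, and equicontinuity passes the convergence to the limit points.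
-/

open Topology
open scoped lp ENNReal

theorem UniformEquicontinuous.isClosed_setOf_exists_tendsto_mem {ι X Y : Type*} [UniformSpace X]
    [UniformSpace Y] [CompleteSpace Y] {l : Filter ι} [l.NeBot] {F : ι → X → Y}
    (hF : UniformEquicontinuous F) {K : Set Y} (hK : IsClosed K) :
    IsClosed {x | ∃ y ∈ K, Tendsto (F · x) l (𝓝 y)} := by
  set S := {x | ∃ y ∈ K, Tendsto (F · x) l (𝓝 y)}
  refine closure_subset_iff_isClosed.mp fun x hx => ?_
  obtain ⟨-, y, -⟩ := closure_nonempty_iff.mp ⟨x, hx⟩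
  have : Nonempty Y := ⟨y⟩
  choose! f hfK hf using fun x (hx : x ∈ S) => hx
  have hfS : UniformContinuousOn f S :=
    Tendsto.uniformContinuousOn_of_uniformEquicontinuousOn hf (hF.uniformEquicontinuousOn S)
  have : (𝓝[S] x).NeBot := mem_closure_iff_nhdsWithin_neBot.mp hx
  obtain ⟨z, hz⟩ := CompleteSpace.complete <|
    ((cauchy_nhds (a := x)).mono nhdsWithin_le_nhds).map_of_le hfS
      (le_principal_iff.mpr self_mem_nhdsWithin)
  exact ⟨z, hK.mem_of_tendsto hz (eventually_nhdsWithin_of_forall hfK),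
    (hF.equicontinuous x).tendsto_of_mem_closure hz hf hx⟩

theorem UniformFun.isClosed_range_const {α β : Type*} [Nonempty α] [UniformSpace β] [T2Space β] :
    IsClosed (Set.range fun b : β => UniformFun.ofFun (fun _ : α => b)) := by
  let a₀ := Classical.arbitrary α
  have hrange : Set.range (fun b : β => UniformFun.ofFun (fun _ : α => b)) =
      ⋂ a, {g | UniformFun.toFun g a = UniformFun.toFun g a₀} := by
    ext g
    simp only [Set.mem_range, Set.mem_iInter, Set.mem_ofPred_eq]
    exact ⟨by rintro ⟨b, rfl⟩ a; rfl, fun h => ⟨UniformFun.toFun g a₀, funext fun a => (h a).symm⟩⟩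
  rw [hrange]
  exact isClosed_iInter fun a =>
    isClosed_eq (UniformFun.uniformContinuous_eval β a).continuous
      (UniformFun.uniformContinuous_eval β a₀).continuous

section tmn

variable (x y : ℕ → ℝ) (m n : ℕ)

lemma tmn_zero : tmn 0 m n = 0 := by
  simp [tmn]

lemma tmn_add : tmn (x + y) m n = tmn x m n + tmn y m n := by
  simp [tmn, Finset.sum_add_distrib, mul_add]

lemma tmn_sub : tmn (x - y) m n = tmn x m n - tmn y m n := by
  simp [tmn, Finset.sum_sub_distrib, mul_sub]

lemma tmn_smul (c : ℝ) : tmn (c • x) m n = c * tmn x m n := by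
  simp only [tmn, Pi.smul_apply, smul_eq_mul, ← Finset.mul_sum]
  ring

lemma abs_tmn_le {C : ℝ} (hC : ∀ i, |x i| ≤ C) : |tmn x m n| ≤ C := by
  rw [tmn, abs_mul, abs_of_pos (by positivity), one_div_mul_eq_div, div_le_iff₀ (by positivity)]
  calc |∑ i ∈ Finset.range (m + 1), x (n + i)|
      ≤ ∑ i ∈ Finset.range (m + 1), |x (n + i)| := Finset.abs_sum_le_sum_abs _ _
    _ ≤ (Finset.range (m + 1)).card • C := Finset.sum_le_card_nsmul _ _ _ fun i _ => hC _
    _ = C * (m + 1) := by simp [mul_comm]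

lemma lipschitzWith_tmn : LipschitzWith 1 fun x : ℓ^∞(ℕ, ℝ) => tmn x m n := by
  refine LipschitzWith.of_dist_le_mul fun x y => ?_
  rw [Real.dist_eq, ← tmn_sub, ← lp.coeFn_sub, dist_eq_norm, NNReal.coe_one, one_mul]
  exact abs_tmn_le _ _ _ fun i => by
    simpa only [Real.norm_eq_abs] using lp.norm_apply_le_norm ENNReal.top_ne_zero (x - y) i

end tmn

section AlmostConvergentTo

variable {x y : ℕ → ℝ} {L M : ℝ}

lemma almostConvergentTo_zero : AlmostConvergentTo 0 0 := by
  simp only [AlmostConvergentTo, tmn_zero]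
  exact tendsto_const_nhds.tendstoUniformly_const

lemma AlmostConvergentTo.add (hx : AlmostConvergentTo x L) (hy : AlmostConvergentTo y M) :
    AlmostConvergentTo (x + y) (L + M) := by
  simp only [AlmostConvergentTo, tmn_add]
  exact TendstoUniformly.add hx hy

lemma AlmostConvergentTo.const_smul (hx : AlmostConvergentTo x L) (c : ℝ) :
    AlmostConvergentTo (c • x) (c * L) := by
  simp only [AlmostConvergentTo, tmn_smul]
  exact (uniformContinuous_mul_left' c).comp_tendstoUniformly hx

lemma almostConvergentTo_iff_tendsto_uniformFun :
    AlmostConvergentTo x L ↔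
      Tendsto (fun m => UniformFun.ofFun (tmn x m)) atTop (𝓝 (UniformFun.ofFun fun _ : ℕ => L)) :=
  UniformFun.tendsto_iff_tendstoUniformly.symm

end AlmostConvergentTo

def almostConvSubmodule : Submodule ℝ ℓ^∞(ℕ, ℝ) where
  carrier := almostConvSet
  zero_mem' := ⟨0, by rw [lp.coeFn_zero]; exact almostConvergentTo_zero⟩
  add_mem' := fun ⟨L, hx⟩ ⟨M, hy⟩ => ⟨L + M, by rw [lp.coeFn_add]; exact hx.add hy⟩
  smul_mem' c _ := fun ⟨L, hx⟩ => ⟨c * L, by rw [lp.coeFn_smul]; exact hx.const_smul c⟩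

lemma isClosed_almostConvSet : IsClosed almostConvSet := by
  have hF : UniformEquicontinuous fun m (x : ℓ^∞(ℕ, ℝ)) => UniformFun.ofFun (tmn x m) :=
    LipschitzWith.uniformEquicontinuous _ 1 fun m =>
      UniformFun.lipschitzWith_ofFun_iff.mpr (lipschitzWith_tmn m)
  convert hF.isClosed_setOf_exists_tendsto_mem (l := atTop) UniformFun.isClosed_range_const
    using 2 with x
  simp [almostConvSet, almostConvergentTo_iff_tendsto_uniformFun]

theorem almostConv_closed_subspace :
    ∃ S : Submodule ℝ (lp (fun _ : ℕ => ℝ) ⊤),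
      (S : Set (lp (fun _ : ℕ => ℝ) ⊤)) = almostConvSet ∧
      IsClosed (S : Set (lp (fun _ : ℕ => ℝ) ⊤)) :=
  ⟨almostConvSubmodule, rfl, isClosed_almostConvSet⟩
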